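/- Strong Liouville property: let u : G → ℝ satisfy u(x) ≥ 0 for all x, and suppose that for every x ∈ G the series Σ_{y∈G} μ(y) u(xy) converges with sum u(x) (i.e. u is harmonic for the random walk with law μ). Then u is constant on G. -/

import Mathlib

/-!
Let `A_k u x` be the average of `u` over the left coset `x H_k`. Harmonicity of `u ≥ 0` for
`μ = ∑ c_k m_k` means, after exchanging the two summations, `u = ∑_k c_k A_k u`. Each `A_k u`
is invariant under right multiplication by `H_k`, and `A_k u = u` as soon as `u` itself is
right `H_k`-invariant. By induction on `n`, if `u` is right `H_k`-invariant for all `k < n`,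
then `(1 - ∑_{k<n} c_k) u = ∑_{k ≥ n} c_k A_k u` is right `H_n`-invariant, and
`∑_{k<n} c_k < 1`. Since the `H_n` exhaust `G`, `u` is constant.
-/

open scoped Classical

theorem HasSum.of_hasSum_comm_of_nonneg {β γ : Type*} {f : β → γ → ℝ} {F : β → ℝ}
    {a : γ → ℝ} {s : ℝ} (hf : ∀ b c, 0 ≤ f b c) (hrow : ∀ b, HasSum (f b) (F b))
    (hF : HasSum F s) (hcol : ∀ c, HasSum (fun b => f b c) (a c)) : HasSum a s := by
  have hsum : Summable (Function.uncurry f) :=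
    (summable_prod_of_nonneg fun p => hf p.1 p.2).mpr
      ⟨fun b => (hrow b).summable, by simpa only [(hrow _).tsum_eq] using hF.summable⟩
  have hs : HasSum (Function.uncurry f) s := by
    simpa only [hF.unique (hsum.hasSum.prod_fiberwise hrow)] using hsum.hasSum
  exact ((Equiv.prodComm γ β).hasSum_iff.mpr hs).prod_fiberwise hcol

namespace Subgroup

variable {G : Type*} [Group G]

def IsRightInvariant (K : Subgroup G) (f : G → ℝ) : Prop :=
  ∀ x, ∀ z ∈ K, f (x * z) = f x

theorem IsRightInvariant.mono {K L : Subgroup G} {f : G → ℝ} (hKL : K ≤ L)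
    (hf : L.IsRightInvariant f) : K.IsRightInvariant f :=
  fun x z hz => hf x z (hKL hz)

noncomputable def uniformDensity (K : Subgroup G) (y : G) : ℝ :=
  if y ∈ K then (Nat.card K : ℝ)⁻¹ else 0

theorem uniformDensity_nonneg (K : Subgroup G) (y : G) : 0 ≤ K.uniformDensity y := by
  unfold uniformDensity; split_ifs <;> positivity

theorem uniformDensity_le_one (K : Subgroup G) (y : G) : K.uniformDensity y ≤ 1 := by
  unfold uniformDensity; split_ifs
  · exact Nat.cast_inv_le_one _
  · exact zero_le_one

noncomputable def cosetAverage (K : Subgroup G) (u : G → ℝ) (x : G) : ℝ :=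
  ∑' z : K, u (x * z) / Nat.card K

theorem isRightInvariant_cosetAverage (K : Subgroup G) (u : G → ℝ) :
    K.IsRightInvariant (K.cosetAverage u) := fun x z hz => by
  simpa only [cosetAverage, Equiv.coe_mulLeft, coe_mul, mul_assoc] using
    (Equiv.mulLeft (⟨z, hz⟩ : K)).tsum_eq fun w : K => u (x * w) / Nat.card K

theorem cosetAverage_eq_of_isRightInvariant {K : Subgroup G} [Finite K] {u : G → ℝ}
    (hu : K.IsRightInvariant u) (x : G) : K.cosetAverage u x = u x := by
  have hcard : (Nat.card K : ℝ) ≠ 0 := Nat.cast_ne_zero.mpr Nat.card_pos.ne'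
  simp only [cosetAverage, fun z : K => hu x z z.2, tsum_const, nsmul_eq_mul]
  field_simp

theorem hasSum_uniformDensity_mul {K : Subgroup G} [Finite K] (u : G → ℝ) (x : G) :
    HasSum (fun y => K.uniformDensity y * u (x * y)) (K.cosetAverage u x) := by
  have hsupp : Function.support (fun y => K.uniformDensity y * u (x * y)) ⊆ K :=
    fun y hy => by_contra fun hyK => hy (by simp [uniformDensity, show y ∉ K from hyK])
  have heq : (fun y => K.uniformDensity y * u (x * y)) ∘ (Subtype.val : K → G) =
      fun z : K => u (x * z) / Nat.card K :=
    funext fun z => by simp [uniformDensity, z.2, div_eq_inv_mul]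
  exact (hasSum_subtype_iff_of_support_subset hsupp).mp (heq ▸ Summable.of_finite.hasSum)

end Subgroup

open Subgroup

section Mixture

variable {G : Type*} [Group G] {H : ℕ → Subgroup G} [∀ k, Finite (H k)] {c : ℕ → ℝ}
  {u : G → ℝ}

theorem hasSum_mul_cosetAverage (hc : ∀ k, 0 ≤ c k) (hcs : Summable c) (hu0 : ∀ x, 0 ≤ u x)
    {x : G} (hharm : HasSum (fun y => (∑' k, c k * (H k).uniformDensity y) * u (x * y)) (u x)) :
    HasSum (fun k => c k * (H k).cosetAverage u x) (u x) := by
  refine HasSum.of_hasSum_comm_of_nonneg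
    (f := fun y k => c k * (H k).uniformDensity y * u (x * y))
    (fun y k => mul_nonneg (mul_nonneg (hc k) (uniformDensity_nonneg _ _)) (hu0 _))
    (fun y => ?_) hharm (fun k => ?_)
  · have hsum : Summable fun k => c k * (H k).uniformDensity y :=
      hcs.of_nonneg_of_le (fun k => mul_nonneg (hc k) (uniformDensity_nonneg _ _))
        fun k => mul_le_of_le_one_right (hc k) (uniformDensity_le_one _ _)
    exact hsum.hasSum.mul_right _
  · simpa only [mul_assoc] using (hasSum_uniformDensity_mul (K := H k) u x).mul_left (c k)

theorem isRightInvariant_of_hasSum_mul_cosetAverage (hH : Monotone H)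
    (hdec : ∀ x, HasSum (fun k => c k * (H k).cosetAverage u x) (u x)) {n : ℕ}
    (hS : ∑ i ∈ Finset.range n, c i ≠ 1) (hprev : ∀ i < n, (H i).IsRightInvariant u) :
    (H n).IsRightInvariant u := by
  set S := ∑ i ∈ Finset.range n, c i
  set T : G → ℝ := fun x => ∑' i, c (i + n) * (H (i + n)).cosetAverage u x
  have hT : (H n).IsRightInvariant T := fun x z hz => tsum_congr fun i => by
    rw [((isRightInvariant_cosetAverage _ u).mono (hH (Nat.le_add_left n i))) x z hz]
  have hsplit : ∀ x, u x = S * u x + T x := fun x => by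
    have h := (hdec x).summable.sum_add_tsum_nat_add n
    rw [(hdec x).tsum_eq] at h
    nth_rw 1 [← h]
    simp only [S, T, Finset.sum_mul]
    congr 1
    refine Finset.sum_congr rfl fun i hi => ?_
    rw [cosetAverage_eq_of_isRightInvariant (hprev i (Finset.mem_range.mp hi))]
  have hu : ∀ x, u x = T x / (1 - S) := fun x => by
    rw [eq_div_iff (sub_ne_zero.mpr hS.symm)]
    linarith [hsplit x]
  intro x z hz
  rw [hu, hu x, hT x z hz]

end Mixture

/-- Proposition 5.4(2) (strong Liouville property): any nonnegative function
`u` on `G` which is harmonic for the random walk with law `μ = ∑_k c_k m_k`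
(i.e. `∑_y μ(y) u(xy)` converges with sum `u(x)` for every `x`) is constant. -/
theorem stmt_12 {G : Type*} [Group G]
    (H : ℕ → Subgroup G) (hfin : ∀ k, (H k : Set G).Finite)
    (hlt : ∀ k, H k < H (k + 1)) (hunion : ∀ x : G, ∃ k, x ∈ H k)
    (c : ℕ → ℝ) (hc : ∀ k, 0 < c k) (hcsum : ∑' k : ℕ, c k = 1)
    (m : ℕ → G → ℝ)
    (hm : ∀ (k : ℕ) (x : G),
      m k x = if x ∈ H k then ((Nat.card (H k) : ℝ))⁻¹ else 0)
    (μ : G → ℝ) (hμ : ∀ x : G, μ x = ∑' k : ℕ, c k * m k x)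
    (u : G → ℝ) (hu0 : ∀ x : G, 0 ≤ u x)
    (hharm : ∀ x : G, HasSum (fun y : G => μ y * u (x * y)) (u x)) :
    ∀ x y : G, u x = u y := by
  have : ∀ k, Finite (H k) := fun k => (hfin k).to_subtype
  have hcs : Summable c := by
    by_contra h
    simp [tsum_eq_zero_of_not_summable h] at hcsum
  have hS : ∀ n, ∑ i ∈ Finset.range n, c i ≠ 1 := fun n => by
    have := hcs.sum_le_tsum (Finset.range (n + 1)) fun i _ => (hc i).le
    rw [Finset.sum_range_succ, hcsum] at this
    linarith [hc n]
  obtain rfl : m = fun k => (H k).uniformDensity := funext₂ hm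
  have hdec : ∀ x, HasSum (fun k => c k * (H k).cosetAverage u x) (u x) := fun x =>
    hasSum_mul_cosetAverage (fun k => (hc k).le) hcs hu0 (by simpa only [hμ] using hharm x)
  have hinv : ∀ n, (H n).IsRightInvariant u := fun n => by
    induction n using Nat.strong_induction_on with
    | _ n ih =>
      exact isRightInvariant_of_hasSum_mul_cosetAverage
        (monotone_nat_of_le_succ fun k => (hlt k).le) hdec (hS n) ih
  intro x y
  obtain ⟨k, hk⟩ := hunion (x⁻¹ * y)
  simpa using (hinv k x _ hk).symm
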